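/- For each α with 0 ≤ α ≤ 1, the class M_α of α-convex functions is not contained in the class U; specifically, g(z) = −log(1−z) lies in M_α for all 0 ≤ α ≤ 1 but not in U. -/

import Mathlib

/-!
For `w = -log (1 - z)` we have `g' = 1 / (1 - z) = exp w`, so `1 + z g''/g' = 1 / (1 - z)` and
`z g'/g = (exp w - 1) / w = ∫₀¹ exp (t w) dt`. On the unit disc `Re (1 - z) > 0`, hence
`|Im w| < π/2` and both quantities have positive real part; the `M_α` expression is a convex
combination of them. At `z = 99/100` the `U` functional equals `99² / (100 log² 100) - 1 > 1`.
-/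

open Metric Complex

theorem Complex.re_exp_sub_one_div_pos {w : ℂ} (hw : w ≠ 0) (him : |w.im| < Real.pi / 2) :
    0 < ((exp w - 1) / w).re := by
  have hcont : Continuous fun t : ℝ => exp (w * t) := by fun_prop
  have hint : (exp w - 1) / w = ∫ t in (0 : ℝ)..1, exp (w * t) := by
    simp [integral_exp_mul_complex hw]
  rw [hint, ← RCLike.re_to_complex,
    ← intervalIntegral.intervalIntegral_re (hcont.intervalIntegrable 0 1)]
  refine intervalIntegral.intervalIntegral_pos_of_pos_on
    ((continuous_re.comp hcont).intervalIntegrable 0 1) (fun t ht => ?_) zero_lt_one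
  have hcos : 0 < Real.cos (w.im * t) := by
    apply Real.cos_pos_of_mem_Ioo
    rw [Set.mem_Ioo, ← abs_lt, abs_mul, abs_of_pos ht.1]
    nlinarith [abs_nonneg w.im, ht.2]
  simpa [exp_re] using mul_pos (Real.exp_pos (w.re * t)) hcos

section NegLogOneSub

variable {z : ℂ}

theorem Complex.re_one_sub_pos (hz : ‖z‖ < 1) : 0 < (1 - z).re := by
  simpa using (re_le_norm z).trans_lt hz

theorem hasDerivAt_neg_log_one_sub (hz : 1 - z ∈ slitPlane) :
    HasDerivAt (fun z => -log (1 - z)) (1 - z)⁻¹ z := by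
  simpa [div_eq_inv_mul] using (((hasDerivAt_id z).const_sub 1).clog hz).fun_neg

theorem deriv_neg_log_one_sub (hz : 1 - z ∈ slitPlane) :
    deriv (fun z => -log (1 - z)) z = (1 - z)⁻¹ :=
  (hasDerivAt_neg_log_one_sub hz).deriv

theorem deriv_deriv_neg_log_one_sub (hz : 1 - z ∈ slitPlane) :
    deriv (deriv fun z => -log (1 - z)) z = ((1 - z) ^ 2)⁻¹ := by
  have hopen : IsOpen {z : ℂ | 1 - z ∈ slitPlane} :=
    isOpen_slitPlane.preimage (by fun_prop)
  have heq : (deriv fun z => -log (1 - z)) =ᶠ[nhds z] fun z => (1 - z)⁻¹ :=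
    Filter.eventually_of_mem (hopen.mem_nhds hz) fun _ => deriv_neg_log_one_sub
  rw [heq.deriv_eq]
  simpa using (((hasDerivAt_id z).const_sub 1).fun_inv (slitPlane_ne_zero hz)).deriv

theorem neg_log_one_sub_ne_zero (hz : 1 - z ≠ 0) (hz0 : z ≠ 0) : -log (1 - z) ≠ 0 := by
  intro h
  have := exp_log hz
  rw [neg_eq_zero.mp h, exp_zero] at this
  exact hz0 (by linear_combination this)

theorem re_mul_inv_div_neg_log_one_sub_pos (hz : 0 < (1 - z).re) (hz0 : z ≠ 0) :
    0 < (z * (1 - z)⁻¹ / -log (1 - z)).re := by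
  have hne : 1 - z ≠ 0 := fun h => by simp [h] at hz
  have hexp : z * (1 - z)⁻¹ = exp (-log (1 - z)) - 1 := by
    rw [exp_neg, exp_log hne]
    field_simp
    ring
  rw [hexp]
  refine re_exp_sub_one_div_pos (neg_log_one_sub_ne_zero hne hz0) ?_
  rw [neg_im, abs_neg, log_im]
  exact abs_arg_lt_pi_div_two_iff.2 (Or.inl hz)

end NegLogOneSub

theorem Real.log_hundred_lt_seven : Real.log 100 < 7 := by
  rw [Real.log_lt_iff_lt_exp (by norm_num), show (7 : ℝ) = (7 : ℕ) * 1 by norm_num,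
    Real.exp_nat_mul]
  calc (100 : ℝ) < 2 ^ 7 := by norm_num
    _ < Real.exp 1 ^ 7 := pow_lt_pow_left₀ Real.exp_one_gt_two (by norm_num) (by norm_num)

theorem exists_one_le_norm_sq_div_neg_log_one_sub_mul_inv_sub_one :
    ∃ z ∈ ball (0 : ℂ) 1, z ≠ 0 ∧ 1 ≤ ‖(z / -log (1 - z)) ^ 2 * (1 - z)⁻¹ - 1‖ := by
  refine ⟨(99 / 100 : ℝ), by norm_num [abs_of_pos], by norm_num, ?_⟩
  set L := Real.log 100
  have hL : 0 < L := Real.log_pos (by norm_num)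
  have hlog : -log (1 - ((99 / 100 : ℝ) : ℂ)) = L := by
    rw [← ofReal_one, ← ofReal_sub, ← ofReal_log (by norm_num), ← ofReal_neg,
      show (1 : ℝ) - 99 / 100 = 100⁻¹ by norm_num, Real.log_inv, neg_neg]
  have hval : (((99 / 100 : ℝ) : ℂ) / -log (1 - ((99 / 100 : ℝ) : ℂ))) ^ 2
      * (1 - ((99 / 100 : ℝ) : ℂ))⁻¹ - 1 = ((99 / 100 / L) ^ 2 * 100 - 1 : ℝ) := by
    rw [hlog]
    push_cast
    ring
  have hbound : 1 ≤ (99 / 100 / L) ^ 2 * 100 - 1 := by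
    rw [div_pow, le_sub_iff_add_le, div_mul_eq_mul_div, le_div_iff₀ (by positivity)]
    nlinarith [Real.log_hundred_lt_seven]
  rw [hval, norm_real, Real.norm_eq_abs]
  exact hbound.trans (le_abs_self _)

theorem stmt_14 (α : ℝ) (hα0 : 0 ≤ α) (hα1 : α ≤ 1)
    (g : ℂ → ℂ) (hg : g = fun z => -Complex.log (1 - z)) :
    (AnalyticOn ℂ g (ball 0 1) ∧ g 0 = 0 ∧ deriv g 0 = 1 ∧
      (∀ z ∈ ball (0:ℂ) 1, z ≠ 0 → g z ≠ 0 ∧ deriv g z ≠ 0) ∧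
      ∀ z ∈ ball (0:ℂ) 1, z ≠ 0 →
        0 < ((1 - (α:ℂ)) * (z * deriv g z / g z)
          + (α:ℂ) * (1 + z * deriv (deriv g) z / deriv g z)).re) ∧
    ¬ (∀ z ∈ ball (0:ℂ) 1, z ≠ 0 → ‖(z / g z) ^ 2 * deriv g z - 1‖ < 1) := by
  subst hg
  have hre : ∀ z ∈ ball (0 : ℂ) 1, 0 < (1 - z).re := fun z hz =>
    re_one_sub_pos (mem_ball_zero_iff.1 hz)
  have hslit : ∀ z ∈ ball (0 : ℂ) 1, 1 - z ∈ slitPlane := fun z hz =>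
    mem_slitPlane_iff.2 (Or.inl (hre z hz))
  refine ⟨⟨((analyticOn_const.sub analyticOn_id).clog hslit).neg, by simp, ?_, ?_, ?_⟩, ?_⟩
  · simp [deriv_neg_log_one_sub (hslit 0 (mem_ball_self one_pos))]
  · intro z hz hz0
    have hne := slitPlane_ne_zero (hslit z hz)
    rw [deriv_neg_log_one_sub (hslit z hz)]
    exact ⟨neg_log_one_sub_ne_zero hne hz0, inv_ne_zero hne⟩
  · intro z hz hz0
    have hne := slitPlane_ne_zero (hslit z hz)
    have hone_add : 1 + z * ((1 - z) ^ 2)⁻¹ / (1 - z)⁻¹ = (1 - z)⁻¹ := by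
      field_simp
      ring
    have hinv : 0 < ((1 - z)⁻¹).re := by
      rw [inv_re]
      exact div_pos (hre z hz) (normSq_pos.2 hne)
    have hmem := convex_halfSpace_re_gt 0 (re_mul_inv_div_neg_log_one_sub_pos (hre z hz) hz0)
      hinv (sub_nonneg.2 hα1) hα0 (sub_add_cancel 1 α)
    rw [deriv_neg_log_one_sub (hslit z hz), deriv_deriv_neg_log_one_sub (hslit z hz), hone_add]
    simpa [real_smul] using hmem
  · obtain ⟨z, hz, hz0, hle⟩ := exists_one_le_norm_sq_div_neg_log_one_sub_mul_inv_sub_one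
    intro hU
    have hlt := hU z hz hz0
    rw [deriv_neg_log_one_sub (hslit z hz)] at hlt
    exact hle.not_gt hlt
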